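/- arXiv:2512.10295 — 9 statements merged into one kernel-verified Lean document; each statement's English description precedes it below -/
import Mathlib

section
/- Lower bound for solutions: let c < 0, let f : V → ℝ, and let u : V → ℝ satisfy L u = f e^{2u} − c on V. If x₀ ∈ V is a point where u attains its minimum over V, then f(x₀) < 0, and for every x ∈ V one has u(x) ≥ (1/2) · log(−c / ‖f‖_∞). -/
/-!
At a minimum point `x₀` of `u` every difference `u x₀ - u y` is nonpositive, so `L u x₀ ≤ 0` and the
equation gives `f x₀ e^{2 u x₀} ≤ c < 0`. Hence `f x₀ < 0` and `-c ≤ ‖f‖_∞ e^{2 u x₀}`; taking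
logarithms bounds `u x₀`, and thus every `u x`, from below.
-/

open Finset Real

theorem sum_mul_sub_nonpos_of_le {V : Type*} (s : Finset V) (W : V → ℝ) (u : V → ℝ) (a : ℝ)
    (hW : ∀ y ∈ s, 0 ≤ W y) (ha : ∀ y ∈ s, a ≤ u y) :
    ∑ y ∈ s, W y * (a - u y) ≤ 0 :=
  sum_nonpos fun y hy => mul_nonpos_of_nonneg_of_nonpos (hW y hy) (sub_nonpos.mpr (ha y hy))

theorem half_log_div_le_of_le_mul_exp {a M t : ℝ} (ha : 0 < a) (hM : 0 < M)
    (h : a ≤ M * exp (2 * t)) : 1 / 2 * log (a / M) ≤ t := by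
  have hdiv : a / M ≤ exp (2 * t) := (div_le_iff₀' hM).mpr h
  have hlog : log (a / M) ≤ 2 * t := by
    simpa only [log_exp] using log_le_log (div_pos ha hM) hdiv
  linarith

theorem neg_le_sup'_abs {V : Type*} [Fintype V] [Nonempty V] (f : V → ℝ) (x : V) :
    -f x ≤ univ.sup' univ_nonempty (fun x => |f x|) :=
  (neg_le_abs (f x)).trans (le_sup' (fun x => |f x|) (mem_univ x))

theorem stmt_3_general {V : Type*} [Fintype V] [Nonempty V] [DecidableEq V]
    (μ : V → ℝ) (hμ : ∀ x, 0 < μ x)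
    (W : V → V → ℝ)
    (hWpos : ∀ x y, x ≠ y → 0 < W x y)
    (L : (V → ℝ) → (V → ℝ))
    (hL : ∀ u x, L u x = (1 / μ x) * ∑ y ∈ Finset.univ.erase x, W x y * (u x - u y))
    (c : ℝ) (hc : c < 0) (f : V → ℝ) (u : V → ℝ)
    (hu : ∀ x, L u x = f x * Real.exp (2 * u x) - c)
    (x₀ : V) (hmin : ∀ x, u x₀ ≤ u x) :
    f x₀ < 0 ∧ ∀ x, u x ≥ (1 / 2) *
      Real.log (-c / Finset.univ.sup' Finset.univ_nonempty (fun x => |f x|)) := by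
  have hL0 : L u x₀ ≤ 0 := by
    rw [hL]
    refine mul_nonpos_of_nonneg_of_nonpos (one_div_nonneg.mpr (hμ x₀).le) ?_
    exact sum_mul_sub_nonpos_of_le _ _ _ _
      (fun y hy => (hWpos x₀ y (ne_of_mem_erase hy).symm).le) (fun y _ => hmin y)
  have hkey : f x₀ * exp (2 * u x₀) ≤ c := by linarith [hu x₀]
  have hexp := exp_pos (2 * u x₀)
  have hf0 : f x₀ < 0 := by nlinarith
  refine ⟨hf0, fun x => le_trans ?_ (hmin x)⟩
  set M := univ.sup' univ_nonempty (fun x => |f x|)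
  have hM : -f x₀ ≤ M := neg_le_sup'_abs f x₀
  exact half_log_div_le_of_le_mul_exp (by linarith) (by linarith) (by nlinarith)

/-- Lower bound for solutions: at a minimum point `x₀` of a solution `u`
one has `f x₀ < 0`, and `u ≥ (1/2) log(-c / ‖f‖_∞)` everywhere. -/
theorem stmt_3 {V : Type*} [Fintype V] [Nonempty V] [DecidableEq V]
    (μ : V → ℝ) (hμ : ∀ x, 0 < μ x)
    (W : V → V → ℝ) (hWsym : ∀ x y, W x y = W y x)
    (hWpos : ∀ x y, x ≠ y → 0 < W x y)
    (L : (V → ℝ) → (V → ℝ))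
    (hL : ∀ u x, L u x = (1 / μ x) * ∑ y ∈ Finset.univ.erase x, W x y * (u x - u y))
    (c : ℝ) (hc : c < 0) (f : V → ℝ) (u : V → ℝ)
    (hu : ∀ x, L u x = f x * Real.exp (2 * u x) - c)
    (x₀ : V) (hmin : ∀ x, u x₀ ≤ u x) :
    f x₀ < 0 ∧ ∀ x, u x ≥ (1 / 2) *
      Real.log (-c / Finset.univ.sup' Finset.univ_nonempty (fun x => |f x|)) :=
  stmt_3_general μ hμ W hWpos L hL c hc f u hu x₀ hmin
end

section
/- For every function u : V → ℝ one has ∫_V e^{−2u} · L u dμ ≤ 0, i.e., Σ_{x∈V} μ(x) · e^{−2u(x)} · L u(x) ≤ 0. -/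
/-!
Multiplying `Σ_y W x y (u x - u y)` by `φ (u x)`, summing over `x` and symmetrising in `(x, y)`
gives `½ Σ_{x,y} W x y (φ (u x) - φ (u y)) (u x - u y)`, and every term is `≤ 0` when `φ` is
antitone and `W ≥ 0`. The theorem is the case `φ t = e^{-2t}`, after cancelling `μ x` against `1 / μ x`.
-/

open Finset

lemma Antitone.sub_mul_sub_nonpos {φ : ℝ → ℝ} (hφ : Antitone φ) (a b : ℝ) :
    (φ a - φ b) * (a - b) ≤ 0 := by
  rcases le_total a b with hab | hba
  · exact mul_nonpos_of_nonneg_of_nonpos (sub_nonneg.2 (hφ hab)) (sub_nonpos.2 hab)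
  · exact mul_nonpos_of_nonpos_of_nonneg (sub_nonpos.2 (hφ hba)) (sub_nonneg.2 hba)

section GraphLaplacian

variable {V : Type*} [Fintype V] {W : V → V → ℝ}

theorem two_mul_sum_mul_sum_sub_eq (hWsym : ∀ x y, W x y = W y x) (f u : V → ℝ) :
    2 * ∑ x, f x * ∑ y, W x y * (u x - u y)
      = ∑ x, ∑ y, W x y * ((f x - f y) * (u x - u y)) := by
  have hswap : ∑ x, ∑ y, W x y * (f y * (u x - u y))
      = -∑ x, ∑ y, W x y * (f x * (u x - u y)) := by
    rw [sum_comm, ← sum_neg_distrib]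
    refine sum_congr rfl fun x _ => ?_
    rw [← sum_neg_distrib]
    refine sum_congr rfl fun y _ => ?_
    rw [hWsym]
    ring
  have hsplit : ∀ x y, W x y * ((f x - f y) * (u x - u y))
      = W x y * (f x * (u x - u y)) - W x y * (f y * (u x - u y)) := fun x y => by ring
  simp only [hsplit, sum_sub_distrib, hswap, sub_neg_eq_add, ← two_mul, mul_sum]
  simp only [mul_left_comm (f _)]

theorem sum_antitone_mul_sum_sub_nonpos (hWsym : ∀ x y, W x y = W y x)
    (hWnonneg : ∀ x y, x ≠ y → 0 ≤ W x y) {φ : ℝ → ℝ} (hφ : Antitone φ) (u : V → ℝ) :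
    ∑ x, φ (u x) * ∑ y, W x y * (u x - u y) ≤ 0 := by
  have hterm : ∀ x y, W x y * ((φ (u x) - φ (u y)) * (u x - u y)) ≤ 0 := by
    intro x y
    rcases eq_or_ne x y with rfl | hxy
    · simp
    · exact mul_nonpos_of_nonneg_of_nonpos (hWnonneg x y hxy) (hφ.sub_mul_sub_nonpos _ _)
  have hgreen := two_mul_sum_mul_sum_sub_eq hWsym (φ ∘ u) u
  simp only [Function.comp_apply] at hgreen
  have hsum : ∑ x, ∑ y, W x y * ((φ (u x) - φ (u y)) * (u x - u y)) ≤ 0 :=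
    sum_nonpos fun x _ => sum_nonpos fun y _ => hterm x y
  linarith

end GraphLaplacian

theorem stmt_5_general {V : Type*} [Fintype V] [DecidableEq V]
    (μ : V → ℝ) (hμ : ∀ x, 0 < μ x)
    (W : V → V → ℝ) (hWsym : ∀ x y, W x y = W y x)
    (hWpos : ∀ x y, x ≠ y → 0 < W x y)
    (L : (V → ℝ) → (V → ℝ))
    (hL : ∀ u x, L u x = (1 / μ x) * ∑ y ∈ Finset.univ.erase x, W x y * (u x - u y)) :
    ∀ u : V → ℝ, ∑ x : V, μ x * (Real.exp (-2 * u x) * L u x) ≤ 0 := by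
  intro u
  have hcancel : ∀ x, μ x * (Real.exp (-2 * u x) * L u x)
      = Real.exp (-2 * u x) * ∑ y, W x y * (u x - u y) := by
    intro x
    rw [hL, sum_erase _ (by simp)]
    field_simp [(hμ x).ne']
  have hexp : Antitone fun t : ℝ => Real.exp (-2 * t) :=
    fun a b hab => Real.exp_le_exp.2 (by linarith)
  simp only [hcancel]
  exact sum_antitone_mul_sum_sub_nonpos hWsym (fun x y h => (hWpos x y h).le) hexp u

/-- For every `u : V → ℝ`, `∫_V e^{-2u} · L u dμ ≤ 0`. -/
theorem stmt_5 {V : Type*} [Fintype V] [Nonempty V] [DecidableEq V]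
    (μ : V → ℝ) (hμ : ∀ x, 0 < μ x)
    (W : V → V → ℝ) (hWsym : ∀ x y, W x y = W y x)
    (hWpos : ∀ x y, x ≠ y → 0 < W x y)
    (L : (V → ℝ) → (V → ℝ))
    (hL : ∀ u x, L u x = (1 / μ x) * ∑ y ∈ Finset.univ.erase x, W x y * (u x - u y)) :
    ∀ u : V → ℝ, ∑ x : V, μ x * (Real.exp (-2 * u x) * L u x) ≤ 0 :=
  stmt_5_general μ hμ W hWsym hWpos L hL
end

section
/- Necessary condition for solvability: let c < 0 and let f : V → ℝ. If there exists u : V → ℝ with L u = f e^{2u} − c on V, then ∫_V f dμ < 0. -/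
/-!
Multiply the equation by `e^{-2u} μ` and sum over `V`:
`∫ f dμ = ∑ₓ e^{-2u(x)} ∑_y W x y (u x - u y) + c ∫ e^{-2u} dμ`.
By the symmetry of `W`, the first sum is half of `∑ₓ ∑_y W x y (u x - u y) (e^{-2u(x)} - e^{-2u(y)})`,
which is `≤ 0` because `t ↦ e^{-2t}` is decreasing; the second term is `< 0` since `c < 0`.
-/

open Finset

section WeightedDifferences

variable {V : Type*} [Fintype V]

theorem two_mul_sum_mul_sum_weight_sub_eq {R : Type*} [CommRing R] (W : V → V → R)
    (hW : ∀ x y, W x y = W y x) (u g : V → R) :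
    2 * ∑ x, g x * ∑ y, W x y * (u x - u y) =
      ∑ x, ∑ y, W x y * (u x - u y) * (g x - g y) := by
  have hswap : ∑ x, ∑ y, W x y * (u x - u y) * g y = -∑ x, g x * ∑ y, W x y * (u x - u y) := by
    rw [sum_comm, ← sum_neg_distrib]
    refine sum_congr rfl fun x _ => ?_
    rw [mul_sum, ← sum_neg_distrib]
    exact sum_congr rfl fun y _ => by rw [hW]; ring
  have hself : ∑ x, ∑ y, W x y * (u x - u y) * g x = ∑ x, g x * ∑ y, W x y * (u x - u y) := by
    simp only [mul_comm (g _), sum_mul]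
  simp only [mul_sub (W _ _ * _), sum_sub_distrib, hself, hswap]
  ring

theorem sum_mul_sum_weight_sub_nonpos_of_antivary (W : V → V → ℝ)
    (hW : ∀ x y, W x y = W y x) (hW_nonneg : ∀ x y, x ≠ y → 0 ≤ W x y) {u g : V → ℝ}
    (hgu : Antivary g u) :
    ∑ x, g x * ∑ y, W x y * (u x - u y) ≤ 0 := by
  suffices h : 2 * ∑ x, g x * ∑ y, W x y * (u x - u y) ≤ 0 by linarith
  rw [two_mul_sum_mul_sum_weight_sub_eq W hW]
  refine sum_nonpos fun x _ => sum_nonpos fun y _ => ?_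
  rcases eq_or_ne x y with rfl | hxy
  · simp
  · rw [mul_assoc, mul_comm (u x - u y)]
    exact mul_nonpos_of_nonneg_of_nonpos (hW_nonneg x y hxy) (hgu.sub_mul_sub_nonpos y x)

end WeightedDifferences

/-- Necessary condition for solvability: if `L u = f e^{2u} - c` has a solution
with `c < 0`, then `∫_V f dμ < 0`. -/
theorem stmt_6 {V : Type*} [Fintype V] [Nonempty V] [DecidableEq V]
    (μ : V → ℝ) (hμ : ∀ x, 0 < μ x)
    (W : V → V → ℝ) (hWsym : ∀ x y, W x y = W y x)
    (hWpos : ∀ x y, x ≠ y → 0 < W x y)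
    (L : (V → ℝ) → (V → ℝ))
    (hL : ∀ u x, L u x = (1 / μ x) * ∑ y ∈ Finset.univ.erase x, W x y * (u x - u y))
    (c : ℝ) (hc : c < 0) (f : V → ℝ)
    (hsol : ∃ u : V → ℝ, ∀ x, L u x = f x * Real.exp (2 * u x) - c) :
    ∑ x : V, f x * μ x < 0 := by
  obtain ⟨u, hu⟩ := hsol
  set φ : V → ℝ := fun x => Real.exp (-2 * u x)
  have hφ_antivary : Antivary φ u :=
    (monovary_self u).comp_antitone_left fun _ _ h => Real.exp_le_exp.2 (by linarith)
  have hLμ : ∀ x, L u x * μ x = ∑ y, W x y * (u x - u y) := fun x => by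
    rw [hL, sum_erase _ (by simp)]
    field_simp [(hμ x).ne']
  have hfμ : ∀ x, f x * μ x = φ x * ∑ y, W x y * (u x - u y) + c * (φ x * μ x) := fun x => by
    have hexp : φ x * Real.exp (2 * u x) = 1 := by simp [φ, ← Real.exp_add]
    rw [← hLμ, hu]
    linear_combination -(f x * μ x) * hexp
  have h_dirichlet := sum_mul_sum_weight_sub_nonpos_of_antivary W hWsym
    (fun x y hxy => (hWpos x y hxy).le) hφ_antivary
  have h_mass : 0 < ∑ x, φ x * μ x :=
    sum_pos (fun x _ => mul_pos (Real.exp_pos _) (hμ x)) univ_nonempty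
  rw [sum_congr rfl fun x _ => hfμ x, sum_add_distrib, ← mul_sum]
  linarith [mul_neg_of_neg_of_pos hc h_mass]
end

section
/- Let c < 0 and let f : V → ℝ. If u : V → ℝ satisfies L u = f e^{2u} − c on V, then ∫_V f e^{2u} dμ = c · Σ_{x∈V} μ(x) < 0; in particular min_{x∈V} f(x) < 0. -/
/-!
Multiplying the equation by `μ` and summing over `V`, the left-hand side becomes
`∑ₓ ∑_y W x y (u x - u y)`, whose summand is antisymmetric in `(x, y)` because `W` is symmetric,
so it vanishes. Hence `∑ f e^{2u} μ = c ∑ μ < 0`, and some term `f x e^{2u(x)} μ(x)` is negative,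
which forces `f x < 0`.
-/

open Finset

theorem sum_sum_mul_sub_eq_zero {ι R : Type*} [CommRing R] (s : Finset ι) {W : ι → ι → R}
    (hW : ∀ x y, W x y = W y x) (u : ι → R) :
    ∑ x ∈ s, ∑ y ∈ s, W x y * (u x - u y) = 0 := by
  simp only [mul_sub, sum_sub_distrib, sub_eq_zero]
  rw [sum_comm]
  exact sum_congr rfl fun x _ => sum_congr rfl fun y _ => by rw [hW]

theorem sum_mul_eq_zero_of_eq_graphLaplacian {V K : Type*} [Fintype V] [DecidableEq V] [Field K]
    {μ : V → K} (hμ : ∀ x, μ x ≠ 0) {W : V → V → K} (hW : ∀ x y, W x y = W y x)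
    {u Δu : V → K} (hΔu : ∀ x, Δu x = (1 / μ x) * ∑ y ∈ univ.erase x, W x y * (u x - u y)) :
    ∑ x, Δu x * μ x = 0 := by
  have hterm : ∀ x, Δu x * μ x = ∑ y, W x y * (u x - u y) := fun x => by
    rw [hΔu, sum_erase _ (by ring), one_div_mul_eq_div, div_mul_cancel₀ _ (hμ x)]
  simp only [hterm]
  exact sum_sum_mul_sub_eq_zero univ hW u

theorem exists_neg_of_sum_mul_neg {ι R : Type*} [Semiring R] [LinearOrder R] [IsOrderedRing R]
    {s : Finset ι} {f g : ι → R}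
    (hg : ∀ x ∈ s, 0 ≤ g x) (h : ∑ x ∈ s, f x * g x < 0) : ∃ x ∈ s, f x < 0 := by
  by_contra! hf
  exact h.not_ge (sum_nonneg fun x hx => mul_nonneg (hf x hx) (hg x hx))

theorem stmt_7_general {V : Type*} [Fintype V] [Nonempty V] [DecidableEq V]
    (μ : V → ℝ) (hμ : ∀ x, 0 < μ x)
    (W : V → V → ℝ) (hWsym : ∀ x y, W x y = W y x)
    (L : (V → ℝ) → (V → ℝ))
    (hL : ∀ u x, L u x = (1 / μ x) * ∑ y ∈ Finset.univ.erase x, W x y * (u x - u y))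
    (c : ℝ) (hc : c < 0) (f : V → ℝ) (u : V → ℝ)
    (hu : ∀ x, L u x = f x * Real.exp (2 * u x) - c) :
    (∑ x : V, f x * Real.exp (2 * u x) * μ x = c * ∑ x : V, μ x) ∧
    (∑ x : V, f x * Real.exp (2 * u x) * μ x < 0) ∧
    Finset.univ.inf' Finset.univ_nonempty f < 0 := by
  have hzero := sum_mul_eq_zero_of_eq_graphLaplacian (fun x => (hμ x).ne') hWsym (hL u)
  have hint : ∑ x, f x * Real.exp (2 * u x) * μ x = c * ∑ x, μ x := by
    simp only [hu, sub_mul, sum_sub_distrib, ← mul_sum] at hzero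
    linarith
  have hneg : ∑ x, f x * Real.exp (2 * u x) * μ x < 0 :=
    hint ▸ mul_neg_of_neg_of_pos hc (sum_pos (fun x _ => hμ x) univ_nonempty)
  obtain ⟨x, hx, hfx⟩ := exists_neg_of_sum_mul_neg
    (fun x _ => (mul_pos (Real.exp_pos _) (hμ x)).le) (by simpa only [mul_assoc] using hneg)
  exact ⟨hint, hneg, (inf'_le f hx).trans_lt hfx⟩

/-- If `u` solves `L u = f e^{2u} - c` with `c < 0`, then
`∫_V f e^{2u} dμ = c · Σ μ < 0`; in particular `min f < 0`. -/
theorem stmt_7 {V : Type*} [Fintype V] [Nonempty V] [DecidableEq V]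
    (μ : V → ℝ) (hμ : ∀ x, 0 < μ x)
    (W : V → V → ℝ) (hWsym : ∀ x y, W x y = W y x)
    (hWpos : ∀ x y, x ≠ y → 0 < W x y)
    (L : (V → ℝ) → (V → ℝ))
    (hL : ∀ u x, L u x = (1 / μ x) * ∑ y ∈ Finset.univ.erase x, W x y * (u x - u y))
    (c : ℝ) (hc : c < 0) (f : V → ℝ) (u : V → ℝ)
    (hu : ∀ x, L u x = f x * Real.exp (2 * u x) - c) :
    (∑ x : V, f x * Real.exp (2 * u x) * μ x = c * ∑ x : V, μ x) ∧
    (∑ x : V, f x * Real.exp (2 * u x) * μ x < 0) ∧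
    Finset.univ.inf' Finset.univ_nonempty f < 0 :=
  stmt_7_general μ hμ W hWsym L hL c hc f u hu
end

section
/- Nonexistence above the threshold −min h: let c < 0 and let h : V → ℝ. If λ ∈ ℝ satisfies λ ≥ −min_{x∈V} h(x) (equivalently, h(x) + λ ≥ 0 for all x ∈ V), then the equation L u = (h + λ) e^{2u} − c has no solution u : V → ℝ. -/
/-! At a minimum point `x₀` of `u` every difference `u x₀ - u y` is `≤ 0`, so `L u x₀ ≤ 0`,
whereas the right-hand side is at least `-c > 0` there. -/

theorem Finset.sum_mul_sub_nonpos_of_forall_le {ι : Type*} (s : Finset ι) (w u : ι → ℝ) (x : ι)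
    (hw : ∀ y ∈ s, 0 ≤ w y) (hx : ∀ y ∈ s, u x ≤ u y) :
    ∑ y ∈ s, w y * (u x - u y) ≤ 0 :=
  Finset.sum_nonpos fun y hy => mul_nonpos_of_nonneg_of_nonpos (hw y hy) (sub_nonpos.mpr (hx y hy))

theorem weighted_laplacian_nonpos_of_forall_le {V : Type*} [Fintype V] [DecidableEq V]
    (μ : V → ℝ) (hμ : ∀ x, 0 < μ x) (W : V → V → ℝ) (hW : ∀ x y, x ≠ y → 0 ≤ W x y)
    (u : V → ℝ) (x₀ : V) (hmin : ∀ y, u x₀ ≤ u y) :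
    (1 / μ x₀) * ∑ y ∈ Finset.univ.erase x₀, W x₀ y * (u x₀ - u y) ≤ 0 :=
  mul_nonpos_of_nonneg_of_nonpos (one_div_pos.mpr (hμ x₀)).le <|
    Finset.sum_mul_sub_nonpos_of_forall_le _ _ _ _
      (fun y hy => hW x₀ y (Finset.ne_of_mem_erase hy).symm)
      (fun y _ => hmin y)

theorem stmt_8_general {V : Type*} [Fintype V] [Nonempty V] [DecidableEq V]
    (μ : V → ℝ) (hμ : ∀ x, 0 < μ x)
    (W : V → V → ℝ)
    (hWpos : ∀ x y, x ≠ y → 0 < W x y)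
    (L : (V → ℝ) → (V → ℝ))
    (hL : ∀ u x, L u x = (1 / μ x) * ∑ y ∈ Finset.univ.erase x, W x y * (u x - u y))
    (c : ℝ) (hc : c < 0) (h : V → ℝ) (lam : ℝ)
    (hlam : ∀ x, 0 ≤ h x + lam) :
    ¬ ∃ u : V → ℝ, ∀ x, L u x = (h x + lam) * Real.exp (2 * u x) - c := by
  rintro ⟨u, hu⟩
  obtain ⟨x₀, hmin⟩ := Finite.exists_min u
  have hL_nonpos : L u x₀ ≤ 0 := by
    rw [hL]
    exact weighted_laplacian_nonpos_of_forall_le μ hμ W (fun x y hxy => (hWpos x y hxy).le) u x₀ hmin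
  have hrhs_nonneg : 0 ≤ (h x₀ + lam) * Real.exp (2 * u x₀) :=
    mul_nonneg (hlam x₀) (Real.exp_pos _).le
  linarith [hu x₀]

/-- Nonexistence above the threshold `-min h`: if `h x + λ ≥ 0` for all `x`
and `c < 0`, then `L u = (h + λ) e^{2u} - c` has no solution. -/
theorem stmt_8 {V : Type*} [Fintype V] [Nonempty V] [DecidableEq V]
    (μ : V → ℝ) (hμ : ∀ x, 0 < μ x)
    (W : V → V → ℝ) (hWsym : ∀ x y, W x y = W y x)
    (hWpos : ∀ x y, x ≠ y → 0 < W x y)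
    (L : (V → ℝ) → (V → ℝ))
    (hL : ∀ u x, L u x = (1 / μ x) * ∑ y ∈ Finset.univ.erase x, W x y * (u x - u y))
    (c : ℝ) (hc : c < 0) (h : V → ℝ) (lam : ℝ)
    (hlam : ∀ x, 0 ≤ h x + lam) :
    ¬ ∃ u : V → ℝ, ∀ x, L u x = (h x + lam) * Real.exp (2 * u x) - c :=
  stmt_8_general μ hμ W hWpos L hL c hc h lam hlam
end

section
/- Rigidity for constant coefficient −1: let c < 0. If u : V → ℝ satisfies L u = −e^{2u} − c on V, then u is the constant function u ≡ (1/2) · log(−c). -/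
/-!
At a maximum point `x₀` of `u` every term `W x₀ y * (u x₀ - u y)` is nonnegative, so `L u x₀ ≥ 0`,
i.e. `e^{2 u(x₀)} ≤ -c`; symmetrically `e^{2 u(x₁)} ≥ -c` at a minimum point `x₁`. Hence
`max u ≤ ½ log(-c) ≤ min u`, and `u` is constant.
-/

open Finset

section WeightedLaplacian

variable {V : Type*} [Fintype V] [DecidableEq V]

noncomputable def weightedLaplacian (μ : V → ℝ) (W : V → V → ℝ) (u : V → ℝ) (x : V) : ℝ :=
  (1 / μ x) * ∑ y ∈ univ.erase x, W x y * (u x - u y)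

variable {μ : V → ℝ} {W : V → V → ℝ} {u : V → ℝ} {x : V}

theorem weightedLaplacian_neg : weightedLaplacian μ W (-u) x = -weightedLaplacian μ W u x := by
  simp only [weightedLaplacian, Pi.neg_apply, ← mul_neg, ← sum_neg_distrib]
  congr 1
  exact sum_congr rfl fun y _ => by ring

theorem weightedLaplacian_nonneg_of_forall_le (hμ : 0 ≤ μ x) (hW : ∀ y, y ≠ x → 0 ≤ W x y)
    (hx : ∀ y, u y ≤ u x) : 0 ≤ weightedLaplacian μ W u x :=
  mul_nonneg (one_div_nonneg.2 hμ) <| sum_nonneg fun y hy =>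
    mul_nonneg (hW y (ne_of_mem_erase hy)) (sub_nonneg.2 (hx y))

theorem weightedLaplacian_nonpos_of_forall_ge (hμ : 0 ≤ μ x) (hW : ∀ y, y ≠ x → 0 ≤ W x y)
    (hx : ∀ y, u x ≤ u y) : weightedLaplacian μ W u x ≤ 0 := by
  have := weightedLaplacian_nonneg_of_forall_le (u := -u) hμ hW fun y => neg_le_neg (hx y)
  rwa [weightedLaplacian_neg, neg_nonneg] at this

end WeightedLaplacian

theorem stmt_9_general {V : Type*} [Fintype V] [Nonempty V] [DecidableEq V]
    (μ : V → ℝ) (hμ : ∀ x, 0 < μ x)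
    (W : V → V → ℝ)
    (hWpos : ∀ x y, x ≠ y → 0 < W x y)
    (L : (V → ℝ) → (V → ℝ))
    (hL : ∀ u x, L u x = (1 / μ x) * ∑ y ∈ Finset.univ.erase x, W x y * (u x - u y))
    (c : ℝ) (hc : c < 0) (u : V → ℝ)
    (hu : ∀ x, L u x = -Real.exp (2 * u x) - c) :
    ∀ x, u x = (1 / 2) * Real.log (-c) := by
  have hW : ∀ x y, y ≠ x → 0 ≤ W x y := fun x y hxy => (hWpos x y hxy.symm).le
  obtain ⟨x₀, -, hx₀⟩ := exists_max_image univ u univ_nonempty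
  obtain ⟨x₁, -, hx₁⟩ := exists_min_image univ u univ_nonempty
  have hmax : 2 * u x₀ ≤ Real.log (-c) := by
    have := weightedLaplacian_nonneg_of_forall_le (hμ x₀).le (hW x₀) fun y => hx₀ y (mem_univ y)
    rw [weightedLaplacian, ← hL, hu] at this
    exact (Real.le_log_iff_exp_le (neg_pos.2 hc)).2 (by linarith)
  have hmin : Real.log (-c) ≤ 2 * u x₁ := by
    have := weightedLaplacian_nonpos_of_forall_ge (hμ x₁).le (hW x₁) fun y => hx₁ y (mem_univ y)
    rw [weightedLaplacian, ← hL, hu] at this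
    exact (Real.log_le_iff_le_exp (neg_pos.2 hc)).2 (by linarith)
  intro x
  linarith [hx₀ x (mem_univ x), hx₁ x (mem_univ x)]

/-- Rigidity for constant coefficient `-1`: if `c < 0` and
`L u = -e^{2u} - c`, then `u ≡ (1/2) log(-c)`. -/
theorem stmt_9 {V : Type*} [Fintype V] [Nonempty V] [DecidableEq V]
    (μ : V → ℝ) (hμ : ∀ x, 0 < μ x)
    (W : V → V → ℝ) (hWsym : ∀ x y, W x y = W y x)
    (hWpos : ∀ x y, x ≠ y → 0 < W x y)
    (L : (V → ℝ) → (V → ℝ))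
    (hL : ∀ u x, L u x = (1 / μ x) * ∑ y ∈ Finset.univ.erase x, W x y * (u x - u y))
    (c : ℝ) (hc : c < 0) (u : V → ℝ)
    (hu : ∀ x, L u x = -Real.exp (2 * u x) - c) :
    ∀ x, u x = (1 / 2) * Real.log (-c) :=
  stmt_9_general μ hμ W hWpos L hL c hc u hu
end

section
/- Uniqueness for nonpositive coefficient: let c < 0 and let f : V → ℝ satisfy f(x) ≤ 0 for all x ∈ V. If u : V → ℝ and v : V → ℝ both satisfy L w = f e^{2w} − c on V, then u = v. -/
/-!
Comparison by the maximum principle. If `u - v` had a positive maximum at `x₀`, then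
`L (u - v) (x₀) = f(x₀) (e^{2u(x₀)} - e^{2v(x₀)}) ≤ 0`, which forces `u - v` to be constant
because every weight `W x₀ y` is positive. Then `u > v` everywhere and `L (u - v) = 0`, so
`f ≡ 0` and `L u ≡ -c`; this is impossible since `∫_V L u dμ = 0` by symmetry of `W`.
-/

open Finset Real

section FracLap

variable {V : Type*} [Fintype V] [DecidableEq V] (μ : V → ℝ) (W : V → V → ℝ)

noncomputable def fracLap (u : V → ℝ) (x : V) : ℝ :=
  (1 / μ x) * ∑ y ∈ univ.erase x, W x y * (u x - u y)

variable {μ W}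

lemma fracLap_sub (u v : V → ℝ) : fracLap μ W (u - v) = fracLap μ W u - fracLap μ W v := by
  funext x
  simp only [fracLap, Pi.sub_apply, ← mul_sub, ← sum_sub_distrib]
  congr 1
  exact sum_congr rfl fun y _ => by ring

lemma fracLap_eq_zero_of_forall_eq {w : V → ℝ} {a : ℝ} (hw : ∀ y, w y = a) (x : V) :
    fracLap μ W w x = 0 := by
  simp [fracLap, hw]

lemma sum_mul_fracLap_eq_zero (hμ : ∀ x, μ x ≠ 0) (hW : ∀ x y, W x y = W y x) (u : V → ℝ) :
    ∑ x, μ x * fracLap μ W u x = 0 := by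
  have hterm : ∀ x, μ x * fracLap μ W u x = ∑ y, W x y * (u x - u y) := fun x => by
    rw [fracLap, ← mul_assoc, mul_one_div_cancel (hμ x), one_mul]
    exact sum_erase _ (by ring)
  have hanti : ∑ x, ∑ y, W x y * (u x - u y) = -∑ x, ∑ y, W x y * (u x - u y) := by
    conv_rhs => rw [sum_comm]
    simp only [← sum_neg_distrib]
    exact sum_congr rfl fun x _ => sum_congr rfl fun y _ => by rw [hW]; ring
  simp only [hterm]
  linarith

lemma eq_zero_of_forall_fracLap_eq [Nonempty V] (hμ : ∀ x, 0 < μ x)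
    (hW : ∀ x y, W x y = W y x) {u : V → ℝ} {k : ℝ} (hu : ∀ x, fracLap μ W u x = k) :
    k = 0 := by
  have hsum := sum_mul_fracLap_eq_zero (fun x => (hμ x).ne') hW u
  simp only [hu, ← sum_mul] at hsum
  exact (mul_eq_zero.1 hsum).resolve_left (sum_pos (fun x _ => hμ x) univ_nonempty).ne'

lemma eq_of_fracLap_nonpos_of_forall_le {w : V → ℝ} {x : V} (hμ : 0 < μ x)
    (hW : ∀ y, y ≠ x → 0 < W x y) (hmax : ∀ y, w y ≤ w x) (hL : fracLap μ W w x ≤ 0) (y : V) :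
    w y = w x := by
  have hterm : ∀ z ∈ univ.erase x, 0 ≤ W x z * (w x - w z) := fun z hz =>
    mul_nonneg (hW z (ne_of_mem_erase hz)).le (sub_nonneg.2 (hmax z))
  have hsum : ∑ z ∈ univ.erase x, W x z * (w x - w z) = 0 :=
    le_antisymm (nonpos_of_mul_nonpos_right hL (by positivity)) (sum_nonneg hterm)
  rcases eq_or_ne y x with rfl | hyx
  · rfl
  have hy := (sum_eq_zero_iff_of_nonneg hterm).1 hsum y (mem_erase.2 ⟨hyx, mem_univ y⟩)
  have := (mul_eq_zero.1 hy).resolve_left (hW y hyx).ne'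
  linarith

lemma le_of_fracLap_eq_mul_exp_sub (hμ : ∀ x, 0 < μ x) (hWsym : ∀ x y, W x y = W y x)
    (hWpos : ∀ x y, x ≠ y → 0 < W x y) {c : ℝ} (hc : c ≠ 0) {f : V → ℝ} (hf : ∀ x, f x ≤ 0)
    {u v : V → ℝ} (hu : ∀ x, fracLap μ W u x = f x * exp (2 * u x) - c)
    (hv : ∀ x, fracLap μ W v x = f x * exp (2 * v x) - c) (x : V) :
    u x ≤ v x := by
  by_contra! hlt
  have : Nonempty V := ⟨x⟩
  obtain ⟨x₀, -, hx₀⟩ := exists_max_image univ (u - v) ⟨x, mem_univ x⟩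
  have hdiff : ∀ y, fracLap μ W (u - v) y = f y * (exp (2 * u y) - exp (2 * v y)) := fun y => by
    rw [fracLap_sub, Pi.sub_apply, hu, hv]
    ring
  have hx := hx₀ x (mem_univ x)
  simp only [Pi.sub_apply] at hx
  have hconst : ∀ y, (u - v) y = (u - v) x₀ := by
    refine eq_of_fracLap_nonpos_of_forall_le (hμ x₀) (fun y hy => hWpos x₀ y hy.symm)
      (fun y => hx₀ y (mem_univ y)) ?_
    rw [hdiff]
    exact mul_nonpos_of_nonpos_of_nonneg (hf x₀)
      (sub_nonneg.2 (exp_le_exp.2 (by linarith)))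
  have hf0 : ∀ y, f y = 0 := fun y => by
    have hy := hconst y
    simp only [Pi.sub_apply] at hy
    have hexp : exp (2 * u y) - exp (2 * v y) ≠ 0 :=
      sub_ne_zero.2 (exp_lt_exp.2 (by linarith)).ne'
    have := hdiff y
    rw [fracLap_eq_zero_of_forall_eq hconst] at this
    exact (mul_eq_zero.1 this.symm).resolve_right hexp
  refine hc (neg_eq_zero.1 (eq_zero_of_forall_fracLap_eq (u := u) hμ hWsym fun y => ?_))
  rw [hu, hf0]
  ring

end FracLap

theorem stmt_10_general {V : Type*} [Fintype V] [DecidableEq V]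
    (μ : V → ℝ) (hμ : ∀ x, 0 < μ x)
    (W : V → V → ℝ) (hWsym : ∀ x y, W x y = W y x)
    (hWpos : ∀ x y, x ≠ y → 0 < W x y)
    (L : (V → ℝ) → (V → ℝ))
    (hL : ∀ u x, L u x = (1 / μ x) * ∑ y ∈ Finset.univ.erase x, W x y * (u x - u y))
    (c : ℝ) (hc : c < 0) (f : V → ℝ) (hf : ∀ x, f x ≤ 0)
    (u v : V → ℝ)
    (hu : ∀ x, L u x = f x * Real.exp (2 * u x) - c)
    (hv : ∀ x, L v x = f x * Real.exp (2 * v x) - c) :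
    u = v := by
  obtain rfl : L = fracLap μ W := funext fun u => funext (hL u)
  funext x
  exact le_antisymm (le_of_fracLap_eq_mul_exp_sub hμ hWsym hWpos hc.ne hf hu hv x)
    (le_of_fracLap_eq_mul_exp_sub hμ hWsym hWpos hc.ne hf hv hu x)

/-- Uniqueness for nonpositive coefficient: if `c < 0`, `f ≤ 0` on `V`,
and `u, v` both solve `L w = f e^{2w} - c`, then `u = v`. -/
theorem stmt_10 {V : Type*} [Fintype V] [Nonempty V] [DecidableEq V]
    (μ : V → ℝ) (hμ : ∀ x, 0 < μ x)
    (W : V → V → ℝ) (hWsym : ∀ x y, W x y = W y x)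
    (hWpos : ∀ x y, x ≠ y → 0 < W x y)
    (L : (V → ℝ) → (V → ℝ))
    (hL : ∀ u x, L u x = (1 / μ x) * ∑ y ∈ Finset.univ.erase x, W x y * (u x - u y))
    (c : ℝ) (hc : c < 0) (f : V → ℝ) (hf : ∀ x, f x ≤ 0)
    (u v : V → ℝ)
    (hu : ∀ x, L u x = f x * Real.exp (2 * u x) - c)
    (hv : ∀ x, L v x = f x * Real.exp (2 * v x) - c) :
    u = v :=
  stmt_10_general μ hμ W hWsym hWpos L hL c hc f hf u v hu hv
end

section
/- Downward propagation of solvability: let c < 0 and let h : V → ℝ satisfy h ≢ 0 and max_{x∈V} h(x) = 0. Suppose λ* > 0 is such that the equation L u = (h + λ*) e^{2u} − c has a solution. Then for every λ with 0 < λ < λ*, the functional J_λ has a local minimum point u_λ (with respect to the sup norm); in particular the equation L u = (h + λ) e^{2u} − c has a solution. -/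
/-!
Since `λ < λ*`, a solution of the equation at `λ*` is a strict supersolution of the equation at
`λ`, and since `c < 0` every sufficiently negative constant is a strict subsolution below it. The
energy attains its minimum on the compact order interval between the two; at a coordinate where the
minimizer touched a barrier, the one-sided derivative of the energy along that coordinate would have
the wrong sign by the strict inequalities and the comparison principle for the Laplacian. So the
minimizer is interior, hence a local minimum and a critical point.
-/

open Finset Function Set Filter Real

theorem IsMinOn.mul_sub_nonneg_of_hasDerivAt {f : ℝ → ℝ} {S : Set ℝ} {t s d : ℝ}
    (hmin : IsMinOn f S t) (hS : Convex ℝ S) (ht : t ∈ S) (hs : s ∈ S)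
    (hf : HasDerivAt f d t) : 0 ≤ d * (s - t) := by
  have hcone : s - t ∈ posTangentConeAt S t :=
    sub_mem_posTangentConeAt_of_segment_subset (hS.segment_subset ht hs)
  simpa [mul_comm] using
    hmin.localize.hasFDerivWithinAt_nonneg hf.hasFDerivAt.hasFDerivWithinAt hcone

theorem sum_sum_mul_sub_mul_sub {V : Type*} [Fintype V] {W : V → V → ℝ}
    (hWsym : ∀ x y, W x y = W y x) (u e : V → ℝ) :
    ∑ p, ∑ q, W p q * ((u p - u q) * (e p - e q)) = 2 * ∑ p, e p * ∑ q, W p q * (u p - u q) := by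
  have hswap : ∑ p, ∑ q, W p q * ((u q - u p) * e q) = ∑ p, ∑ q, W p q * ((u p - u q) * e p) := by
    rw [sum_comm]
    exact sum_congr rfl fun p _ ↦ sum_congr rfl fun q _ ↦ by rw [hWsym]
  calc ∑ p, ∑ q, W p q * ((u p - u q) * (e p - e q))
      = ∑ p, ∑ q, W p q * ((u p - u q) * e p) + ∑ p, ∑ q, W p q * ((u q - u p) * e q) := by
        simp only [← sum_add_distrib]
        exact sum_congr rfl fun p _ ↦ sum_congr rfl fun q _ ↦ by ring
    _ = 2 * ∑ p, e p * ∑ q, W p q * (u p - u q) := by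
        rw [hswap, ← two_mul]
        simp only [mul_sum]
        exact sum_congr rfl fun p _ ↦ sum_congr rfl fun q _ ↦ by ring

section GraphEnergy

variable {V : Type*} [Fintype V] [DecidableEq V] (μ : V → ℝ) (W : V → V → ℝ)

noncomputable def graphLaplacian (u : V → ℝ) (x : V) : ℝ :=
  (1 / μ x) * ∑ y ∈ univ.erase x, W x y * (u x - u y)

/-- The energy whose critical points solve `graphLaplacian μ W u x = g x (u x)`, where `G x` is a
primitive of `g x`. -/
noncomputable def graphEnergy (G : V → ℝ → ℝ) (u : V → ℝ) : ℝ :=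
  (1 / 4) * ∑ x, ∑ y ∈ univ.erase x, W x y * (u x - u y) ^ 2 - ∑ x, G x (u x) * μ x

variable {μ W}

theorem graphLaplacian_const (a : ℝ) (x : V) : graphLaplacian μ W (fun _ ↦ a) x = 0 := by
  simp [graphLaplacian]

theorem graphLaplacian_le_of_le_of_eq (hW : ∀ x y, x ≠ y → 0 ≤ W x y) {u v : V → ℝ} {x : V}
    (hμ : 0 < μ x) (huv : u ≤ v) (hx : u x = v x) :
    graphLaplacian μ W v x ≤ graphLaplacian μ W u x := by
  unfold graphLaplacian
  refine mul_le_mul_of_nonneg_left (sum_le_sum fun y hy ↦ ?_) (by positivity)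
  exact mul_le_mul_of_nonneg_left (by linarith [huv y]) (hW x y (ne_of_mem_erase hy).symm)

theorem continuous_graphEnergy {G : V → ℝ → ℝ} (hG : ∀ x, Continuous (G x)) :
    Continuous (graphEnergy μ W G) := by
  unfold graphEnergy
  fun_prop

theorem hasDerivAt_graphEnergy_update (hWsym : ∀ x y, W x y = W y x) {G g : V → ℝ → ℝ}
    (hG : ∀ x s, HasDerivAt (G x) (g x s) s) (u : V → ℝ) {x : V} (hμ : μ x ≠ 0) :
    HasDerivAt (fun s ↦ graphEnergy μ W G (update u x s))
      (μ x * (graphLaplacian μ W u x - g x (u x))) (u x) := by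
  set e : V → ℝ := Pi.single x 1
  have hcoord : ∀ p, HasDerivAt (fun s ↦ update u x s p) (e p) (u x) :=
    hasDerivAt_pi.1 (hasDerivAt_update u x (u x))
  have hQ : HasDerivAt (fun s ↦ ∑ p, ∑ q, W p q * (update u x s p - update u x s q) ^ 2)
      (2 * ∑ p, ∑ q, W p q * ((u p - u q) * (e p - e q))) (u x) := by
    rw [mul_sum]
    refine HasDerivAt.fun_sum fun p _ ↦ ?_
    rw [mul_sum]
    refine HasDerivAt.fun_sum fun q _ ↦ ?_
    refine ((((hcoord p).fun_sub (hcoord q)).fun_pow 2).const_mul (W p q)).congr_deriv ?_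
    rw [update_eq_self]
    push_cast
    ring
  have hP : HasDerivAt (fun s ↦ ∑ p, G p (update u x s p) * μ p)
      (∑ p, e p * (g p (u p) * μ p)) (u x) := by
    refine HasDerivAt.fun_sum fun p _ ↦ ?_
    refine (((hG p _).comp (u x) (hcoord p)).mul_const (μ p)).congr_deriv ?_
    rw [update_eq_self]
    ring
  unfold graphEnergy graphLaplacian
  simp only [sum_erase_eq_sub, Finset.mem_univ, sub_self, mul_zero, ne_eq, OfNat.ofNat_ne_zero,
    not_false_eq_true, zero_pow, sub_zero]
  refine ((hQ.const_mul (1 / 4)).fun_sub hP).congr_deriv ?_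
  rw [sum_sum_mul_sub_mul_sub hWsym]
  simp only [one_div, Pi.single_apply, ite_mul, one_mul, zero_mul, sum_ite_eq', Finset.mem_univ,
    ↓reduceIte, e]
  field_simp
  ring

theorem exists_isLocalMin_graphEnergy_of_subsolution_of_supersolution (hμ : ∀ x, 0 < μ x)
    (hWsym : ∀ x y, W x y = W y x) (hW : ∀ x y, x ≠ y → 0 ≤ W x y) {G g : V → ℝ → ℝ}
    (hG : ∀ x s, HasDerivAt (G x) (g x s) s) {uSub uSup : V → ℝ} (hlt : ∀ x, uSub x < uSup x)
    (hsub : ∀ x, graphLaplacian μ W uSub x < g x (uSub x))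
    (hsup : ∀ x, g x (uSup x) < graphLaplacian μ W uSup x) :
    ∃ u, IsLocalMin (graphEnergy μ W G) u ∧ ∀ x, graphLaplacian μ W u x = g x (u x) := by
  obtain ⟨u, huK, hmin⟩ := (isCompact_univ_pi fun x ↦ isCompact_Icc (a := uSub x) (b := uSup x))
    |>.exists_isMinOn ⟨uSup, fun x _ ↦ ⟨(hlt x).le, le_rfl⟩⟩
      (continuous_graphEnergy fun x ↦
        continuous_iff_continuousAt.2 fun s ↦ (hG x s).continuousAt).continuousOn
  have hu : ∀ x, u x ∈ Icc (uSub x) (uSup x) := fun x ↦ huK x (mem_univ x)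
  have hslice : ∀ x, IsMinOn (fun s ↦ graphEnergy μ W G (update u x s)) (Icc (uSub x) (uSup x))
      (u x) := by
    refine fun x ↦ hmin.comp_mapsTo (fun s hs y _ ↦ ?_) (update_eq_self x u)
    rcases eq_or_ne y x with rfl | hyx
    · simpa using hs
    · simpa [hyx] using hu y
  have hderiv : ∀ x, HasDerivAt (fun s ↦ graphEnergy μ W G (update u x s))
      (μ x * (graphLaplacian μ W u x - g x (u x))) (u x) :=
    fun x ↦ hasDerivAt_graphEnergy_update hWsym hG u (hμ x).ne'
  have hfirstOrder : ∀ x, ∀ s ∈ Icc (uSub x) (uSup x),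
      0 ≤ μ x * (graphLaplacian μ W u x - g x (u x)) * (s - u x) :=
    fun x s hs ↦ (hslice x).mul_sub_nonneg_of_hasDerivAt (convex_Icc _ _) (hu x) hs (hderiv x)
  have hinterior : ∀ x, u x ∈ Ioo (uSub x) (uSup x) := by
    intro x
    refine ⟨(hu x).1.lt_of_ne fun hx ↦ ?_, (hu x).2.lt_of_ne fun hx ↦ ?_⟩
    · have hL := graphLaplacian_le_of_le_of_eq hW (hμ x) (fun y ↦ (hu y).1) hx
      have := hfirstOrder x (uSup x) (right_mem_Icc.2 (hlt x).le)
      rw [← hx] at this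
      have hneg : graphLaplacian μ W u x - g x (uSub x) < 0 := by linarith [hsub x]
      linarith [mul_neg_of_neg_of_pos (mul_neg_of_pos_of_neg (hμ x) hneg) (sub_pos.2 (hlt x))]
    · have hL := graphLaplacian_le_of_le_of_eq hW (hμ x) (fun y ↦ (hu y).2) hx
      have := hfirstOrder x (uSub x) (left_mem_Icc.2 (hlt x).le)
      rw [hx] at this
      have hpos : 0 < graphLaplacian μ W u x - g x (uSup x) := by linarith [hsup x]
      linarith [mul_neg_of_pos_of_neg (mul_pos (hμ x) hpos) (sub_neg.2 (hlt x))]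
  refine ⟨u, hmin.isLocalMin ?_, fun x ↦ ?_⟩
  · exact mem_of_superset ((isOpen_set_pi finite_univ fun x _ ↦ isOpen_Ioo).mem_nhds
      fun x _ ↦ hinterior x) (pi_mono fun x _ ↦ Ioo_subset_Icc_self)
  · have := ((hslice x).isLocalMin (Icc_mem_nhds (hinterior x).1 (hinterior x).2)).hasDerivAt_eq_zero
      (hderiv x)
    rwa [mul_eq_zero, sub_eq_zero, or_iff_right (hμ x).ne'] at this

end GraphEnergy

theorem stmt_12_general {V : Type*} [Fintype V] [DecidableEq V]
    (μ : V → ℝ) (hμ : ∀ x, 0 < μ x)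
    (W : V → V → ℝ) (hWsym : ∀ x y, W x y = W y x)
    (hWpos : ∀ x y, x ≠ y → 0 < W x y)
    (L : (V → ℝ) → (V → ℝ))
    (hL : ∀ u x, L u x = (1 / μ x) * ∑ y ∈ Finset.univ.erase x, W x y * (u x - u y))
    (c : ℝ) (hc : c < 0)
    (h : V → ℝ)
    (J : ℝ → (V → ℝ) → ℝ)
    (hJ : ∀ lam u, J lam u =
      (1 / 4) * ∑ x : V, ∑ y ∈ Finset.univ.erase x, W x y * (u x - u y) ^ 2
      - (1 / 2) * ∑ x : V, (h x + lam) * Real.exp (2 * u x) * μ x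
      + c * ∑ x : V, u x * μ x)
    (lamStar : ℝ)
    (hsol : ∃ u : V → ℝ, ∀ x, L u x = (h x + lamStar) * Real.exp (2 * u x) - c) :
    ∀ lam : ℝ, 0 < lam → lam < lamStar →
      ∃ u : V → ℝ, IsLocalMin (J lam) u ∧
        ∀ x, L u x = (h x + lam) * Real.exp (2 * u x) - c := by
  intro lam _ hlam
  obtain ⟨uS, huS⟩ := hsol
  have hLeq : L = graphLaplacian μ W := funext fun u ↦ funext (hL u)
  have hJeq : J lam = graphEnergy μ W (fun x s ↦ (h x + lam) * exp (2 * s) / 2 - c * s) := by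
    ext u
    have hpot : ∑ x, ((h x + lam) * exp (2 * u x) / 2 - c * u x) * μ x
        = (1 / 2) * ∑ x, (h x + lam) * exp (2 * u x) * μ x - c * ∑ x, u x * μ x := by
      simp only [sub_mul, sum_sub_distrib, mul_sum]
      congr 1 <;> exact sum_congr rfl fun x _ ↦ by ring
    rw [hJ, graphEnergy, hpot]
    ring
  have hG : ∀ x s, HasDerivAt (fun s ↦ (h x + lam) * exp (2 * s) / 2 - c * s)
      ((h x + lam) * exp (2 * s) - c) s := fun x s ↦
    (((((hasDerivAt_id s).const_mul 2).exp.const_mul (h x + lam)).div_const 2).sub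
      ((hasDerivAt_id s).const_mul c)).congr_deriv (by simp only [id_eq, mul_one]; ring)
  -- a very negative constant is a strict subsolution below `uS`
  obtain ⟨a, ha⟩ : ∃ a : ℝ, ∀ x, a < uS x ∧ c < (h x + lam) * exp (2 * a) := by
    refine (eventually_all.2 fun x ↦ (eventually_lt_atBot (uS x)).and ?_).exists
    have hexp := (tendsto_exp_atBot.comp (tendsto_id.const_mul_atBot two_pos)).const_mul (h x + lam)
    exact (mul_zero (h x + lam) ▸ hexp).eventually_const_lt hc
  obtain ⟨u, hmin, hu⟩ := exists_isLocalMin_graphEnergy_of_subsolution_of_supersolution hμ hWsym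
    (fun x y hxy ↦ (hWpos x y hxy).le) hG (uSub := fun _ ↦ a) (uSup := uS) (fun x ↦ (ha x).1)
    (fun x ↦ by rw [graphLaplacian_const]; linarith [(ha x).2])
    (fun x ↦ by rw [← hLeq, huS]; gcongr)
  exact ⟨u, hJeq ▸ hmin, hLeq ▸ hu⟩

/-- Downward propagation of solvability: if `L u = (h + λ*) e^{2u} - c`
has a solution for some `λ* > 0`, then for each `0 < λ < λ*` the functional
`J_λ` has a local minimum point; in particular the equation with parameter `λ`
has a solution. -/
theorem stmt_12 {V : Type*} [Fintype V] [Nonempty V] [DecidableEq V]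
    (μ : V → ℝ) (hμ : ∀ x, 0 < μ x)
    (W : V → V → ℝ) (hWsym : ∀ x y, W x y = W y x)
    (hWpos : ∀ x y, x ≠ y → 0 < W x y)
    (L : (V → ℝ) → (V → ℝ))
    (hL : ∀ u x, L u x = (1 / μ x) * ∑ y ∈ Finset.univ.erase x, W x y * (u x - u y))
    (c : ℝ) (hc : c < 0)
    (h : V → ℝ) (hh0 : h ≠ 0) (hhle : ∀ x, h x ≤ 0) (hhmax : ∃ x, h x = 0)
    (J : ℝ → (V → ℝ) → ℝ)
    (hJ : ∀ lam u, J lam u =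
      (1 / 4) * ∑ x : V, ∑ y ∈ Finset.univ.erase x, W x y * (u x - u y) ^ 2
      - (1 / 2) * ∑ x : V, (h x + lam) * Real.exp (2 * u x) * μ x
      + c * ∑ x : V, u x * μ x)
    (lamStar : ℝ) (hlamStar : 0 < lamStar)
    (hsol : ∃ u : V → ℝ, ∀ x, L u x = (h x + lamStar) * Real.exp (2 * u x) - c) :
    ∀ lam : ℝ, 0 < lam → lam < lamStar →
      ∃ u : V → ℝ, IsLocalMin (J lam) u ∧
        ∀ x, L u x = (h x + lam) * Real.exp (2 * u x) - c :=
  stmt_12_general μ hμ W hWsym hWpos L hL c hc h J hJ lamStar hsol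
end

section
/- Compactness of approximate solutions (Palais–Smale type property): let c < 0 and let f : V → ℝ. If (u_k) is a sequence of functions V → ℝ such that ‖L u_k − f e^{2u_k} + c‖_∞ → 0 as k → ∞, then (u_k) has a subsequence converging uniformly on V to some u : V → ℝ satisfying L u = f e^{2u} − c. -/
/-!
A priori bounds plus Bolzano–Weierstrass. Write `L u = f e^{2u} - c + g` with `|g| ≤ -c/2`.
At a minimum point `L u ≤ 0`, so `f e^{2u} ≤ c/2 < 0` there: this bounds `min u` from below and
forces `f < 0` at the minimum. At a maximum point `x₀`, `L u x₀ ≥ 0` dominates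
`W x₀ y (u x₀ - u y) / μ x₀` for every `y`, while `|L u| ≤ C (max u - min u)` everywhere.
If `f x₀ > 0`, the equation at `x₀` gives `e^{2 max u} ≲ max u - min u`, which bounds `max u`
since the exponential beats linear growth. If `f x₀ ≤ 0`, it gives `L u x₀ ≤ -3c/2`, which bounds
the oscillation, and then the equation at the minimum bounds `min u` from above. A subsequence of
the bounded sequence converges, and its limit solves the equation because `L` is continuous.
-/

open Finset Filter Real Topology

theorem Finite.exists_pos_le_of_pos {ι : Type*} [Finite ι] (g : ι → ℝ) :
    ∃ δ > 0, ∀ i, 0 < g i → δ ≤ g i := by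
  obtain ⟨B, hB⟩ := Finite.exists_le fun i => (g i)⁻¹
  exact ⟨(max B 1)⁻¹, by positivity,
    fun i hi => inv_le_of_inv_le₀ hi ((hB i).trans (le_max_left _ _))⟩

theorem exists_le_of_mul_exp_le_linear {a : ℝ} (ha : 0 < a) (b d : ℝ) :
    ∃ T, ∀ t, a * exp t ≤ b * t + d → t ≤ T := by
  have h := (tendsto_mul_exp_add_div_pow_atTop a (-d) 1 ha).eventually_gt_atTop b
  obtain ⟨T, hT⟩ := (h.and (eventually_gt_atTop 0)).exists_forall_of_atTop
  refine ⟨T, fun t ht => not_lt.1 fun hTt => ?_⟩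
  obtain ⟨hgt, htpos⟩ := hT t hTt.le
  rw [pow_one, lt_div_iff₀ htpos] at hgt
  linarith

theorem tendstoUniformly_of_tendsto_pi {α ι β : Type*} [Fintype ι] [PseudoMetricSpace β]
    {F : α → ι → β} {v : ι → β} {l : Filter α} (h : Tendsto F l (𝓝 v)) :
    TendstoUniformly F v l :=
  Metric.tendstoUniformly_iff.2 fun ε hε => (Metric.tendsto_nhds.1 h ε hε).mono
    fun _ hk x => (dist_le_pi_dist _ _ x).trans_lt (dist_comm (F _) v ▸ hk)

section

variable {V : Type*} [Fintype V] [DecidableEq V]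

noncomputable def fracLaplacian (μ : V → ℝ) (W : V → V → ℝ) (u : V → ℝ) (x : V) : ℝ :=
  1 / μ x * ∑ y ∈ univ.erase x, W x y * (u x - u y)

noncomputable def kazdanWarnerResidual (μ : V → ℝ) (W : V → V → ℝ) (f : V → ℝ) (c : ℝ)
    (u : V → ℝ) (x : V) : ℝ :=
  fracLaplacian μ W u x - f x * exp (2 * u x) + c

variable {μ : V → ℝ} {W : V → V → ℝ} {f : V → ℝ} {c : ℝ} {u : V → ℝ} {x : V}

theorem fracLaplacian_nonneg_of_isMax (hμ : 0 ≤ μ x) (hW : ∀ x y, x ≠ y → 0 ≤ W x y)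
    (hmax : ∀ y, u y ≤ u x) : 0 ≤ fracLaplacian μ W u x :=
  mul_nonneg (by positivity) <| sum_nonneg fun y hy =>
    mul_nonneg (hW x y (ne_of_mem_erase hy).symm) (sub_nonneg.2 (hmax y))

theorem fracLaplacian_nonpos_of_isMin (hμ : 0 ≤ μ x) (hW : ∀ x y, x ≠ y → 0 ≤ W x y)
    (hmin : ∀ y, u x ≤ u y) : fracLaplacian μ W u x ≤ 0 :=
  mul_nonpos_of_nonneg_of_nonpos (by positivity) <| sum_nonpos fun y hy =>
    mul_nonpos_of_nonneg_of_nonpos (hW x y (ne_of_mem_erase hy).symm) (sub_nonpos.2 (hmin y))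

theorem mul_sub_le_mul_fracLaplacian_of_isMax {y : V} (hμ : 0 < μ x)
    (hW : ∀ x y, x ≠ y → 0 ≤ W x y) (hmax : ∀ y, u y ≤ u x) (hy : y ≠ x) :
    W x y * (u x - u y) ≤ μ x * fracLaplacian μ W u x := by
  rw [fracLaplacian, ← mul_assoc, mul_one_div_cancel hμ.ne', one_mul]
  exact single_le_sum (f := fun y => W x y * (u x - u y))
    (fun z hz => mul_nonneg (hW x z (ne_of_mem_erase hz).symm) (sub_nonneg.2 (hmax z)))
    (mem_erase.2 ⟨hy, mem_univ y⟩)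

theorem abs_fracLaplacian_le {m M : ℝ} (hμ : 0 < μ x) (hlo : ∀ y, m ≤ u y)
    (hhi : ∀ y, u y ≤ M) :
    |fracLaplacian μ W u x| ≤ (∑ y ∈ univ.erase x, |W x y| / μ x) * (M - m) := by
  have hosc (y : V) : |u x - u y| ≤ M - m :=
    abs_sub_le_iff.2 ⟨by linarith [hhi x, hlo y], by linarith [hhi y, hlo x]⟩
  calc |fracLaplacian μ W u x| = |∑ y ∈ univ.erase x, W x y * (u x - u y)| / μ x := by
        rw [fracLaplacian, abs_mul, abs_of_pos (one_div_pos.2 hμ), one_div_mul_eq_div]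
    _ ≤ (∑ y ∈ univ.erase x, |W x y| * (M - m)) / μ x := by
        gcongr
        refine (abs_sum_le_sum_abs _ _).trans (sum_le_sum fun y _ => ?_)
        rw [abs_mul]
        exact mul_le_mul_of_nonneg_left (hosc y) (abs_nonneg _)
    _ = (∑ y ∈ univ.erase x, |W x y| / μ x) * (M - m) := by
        rw [sum_div, sum_mul]
        exact sum_congr rfl fun y _ => div_mul_eq_mul_div _ _ _ |>.symm

theorem exists_abs_fracLaplacian_le (hμ : ∀ x, 0 < μ x) :
    ∃ C, 0 ≤ C ∧ ∀ (u : V → ℝ) (m M : ℝ), (∀ y, m ≤ u y) → (∀ y, u y ≤ M) →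
      ∀ x, |fracLaplacian μ W u x| ≤ C * (M - m) := by
  obtain ⟨C, hC⟩ := Finite.exists_le fun x => ∑ y ∈ univ.erase x, |W x y| / μ x
  refine ⟨max C 0, le_max_right _ _, fun u m M hlo hhi x =>
    (abs_fracLaplacian_le (hμ x) hlo hhi).trans ?_⟩
  have : 0 ≤ M - m := by linarith [hlo x, hhi x]
  gcongr
  exact (hC x).trans (le_max_left _ _)

theorem exists_sub_le_mul_fracLaplacian_of_isMax (hμ : ∀ x, 0 < μ x)
    (hW : ∀ x y, x ≠ y → 0 < W x y) :
    ∃ K, 0 ≤ K ∧ ∀ (u : V → ℝ) (x y : V), (∀ z, u z ≤ u x) →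
      u x - u y ≤ K * fracLaplacian μ W u x := by
  obtain ⟨K, hK⟩ := Finite.exists_le fun p : V × V => μ p.1 / W p.1 p.2
  have hW' : ∀ x y, x ≠ y → 0 ≤ W x y := fun x y h => (hW x y h).le
  refine ⟨max K 0, le_max_right _ _, fun u x y hmax => ?_⟩
  have hL := fracLaplacian_nonneg_of_isMax (hμ x).le hW' hmax
  rcases eq_or_ne y x with rfl | hyx
  · simpa using mul_nonneg (le_max_right K 0) hL
  have hsingle := mul_sub_le_mul_fracLaplacian_of_isMax (hμ x) hW' hmax hyx
  calc u x - u y ≤ μ x / W x y * fracLaplacian μ W u x := by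
        rw [div_mul_eq_mul_div, le_div_iff₀ (hW x y hyx.symm)]
        linarith
    _ ≤ max K 0 * fracLaplacian μ W u x := by
        gcongr
        exact (hK (x, y)).trans (le_max_left _ _)

theorem continuous_fracLaplacian_apply (μ : V → ℝ) (W : V → V → ℝ) (x : V) :
    Continuous fun u => fracLaplacian μ W u x := by
  unfold fracLaplacian
  fun_prop

theorem mul_exp_le_of_isMin (hμ : 0 ≤ μ x)
    (hW : ∀ x y, x ≠ y → 0 ≤ W x y) (hres : |kazdanWarnerResidual μ W f c u x| ≤ -c / 2)
    (hmin : ∀ y, u x ≤ u y) : f x * exp (2 * u x) ≤ c / 2 := by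
  have := fracLaplacian_nonpos_of_isMin hμ hW hmin
  unfold kazdanWarnerResidual at hres
  linarith [(abs_le.1 hres).1]

theorem exists_ge_of_abs_kazdanWarnerResidual_le (hμ : ∀ x, 0 ≤ μ x)
    (hW : ∀ x y, x ≠ y → 0 ≤ W x y) (hc : c < 0) :
    ∃ m, ∀ u : V → ℝ, (∀ x, |kazdanWarnerResidual μ W f c u x| ≤ -c / 2) →
      ∀ x, m ≤ u x := by
  obtain ⟨F, hF⟩ := Finite.exists_le fun x => |f x|
  refine ⟨log (-c / (2 * max F 1)) / 2, fun u hres x => ?_⟩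
  have : Nonempty V := ⟨x⟩
  obtain ⟨x₁, hmin⟩ := Finite.exists_min u
  have hf₁ := mul_exp_le_of_isMin (hμ x₁) hW (hres x₁) hmin
  have hF₁ : -f x₁ ≤ max F 1 := (neg_le_abs _).trans ((hF x₁).trans (le_max_left _ _))
  have : -c / (2 * max F 1) ≤ exp (2 * u x₁) := by
    rw [div_le_iff₀ (by positivity)]
    nlinarith [exp_pos (2 * u x₁)]
  have := (log_le_iff_le_exp (div_pos (by linarith) (by positivity))).2 this
  linarith [hmin x]

theorem exists_le_of_abs_kazdanWarnerResidual_le (hμ : ∀ x, 0 < μ x)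
    (hW : ∀ x y, x ≠ y → 0 < W x y) (hc : c < 0) :
    ∃ M, ∀ u : V → ℝ, (∀ x, |kazdanWarnerResidual μ W f c u x| ≤ -c / 2) →
      ∀ x, u x ≤ M := by
  have hW' : ∀ x y, x ≠ y → 0 ≤ W x y := fun x y h => (hW x y h).le
  obtain ⟨m, hm⟩ := exists_ge_of_abs_kazdanWarnerResidual_le (fun x => (hμ x).le) hW' hc
  obtain ⟨C, hC0, hC⟩ := exists_abs_fracLaplacian_le (W := W) hμ
  obtain ⟨K, hK0, hK⟩ := exists_sub_le_mul_fracLaplacian_of_isMax hμ hW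
  obtain ⟨δ, hδ, hδf⟩ := Finite.exists_pos_le_of_pos fun x => -f x
  obtain ⟨δ', hδ', hδ'f⟩ := Finite.exists_pos_le_of_pos f
  obtain ⟨T, hT⟩ := exists_le_of_mul_exp_le_linear hδ' (C / 2) (-C * m)
  obtain ⟨T', hT'⟩ := exists_le_of_mul_exp_le_linear hδ 0 (-3 * c / 2 * (C * K + 1))
  refine ⟨max (T / 2) (T' / 2 + K * (-3 * c / 2)), fun u hres x => ?_⟩
  have : Nonempty V := ⟨x⟩
  obtain ⟨x₀, hmax⟩ := Finite.exists_max u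
  obtain ⟨x₁, hmin⟩ := Finite.exists_min u
  have hres₀ := abs_le.1 (hres x₀)
  have hres₁ := abs_le.1 (hres x₁)
  unfold kazdanWarnerResidual at hres₀ hres₁
  have hLu := hC u (u x₁) (u x₀) hmin hmax
  refine (hmax x).trans ?_
  rcases lt_or_ge 0 (f x₀) with hf₀ | hf₀
  · have hexp_le : δ' * exp (2 * u x₀) ≤ C / 2 * (2 * u x₀) + -C * m := by
      have := (abs_le.1 (hLu x₀)).2
      have := mul_le_mul_of_nonneg_left (hm u hres x₁) hC0
      nlinarith [hδ'f x₀ hf₀, exp_pos (2 * u x₀)]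
    linarith [hT _ hexp_le, le_max_left (T / 2) (T' / 2 + K * (-3 * c / 2))]
  · have hosc : u x₀ - u x₁ ≤ K * (-3 * c / 2) := by
      refine (hK u x₀ x₁ hmax).trans (mul_le_mul_of_nonneg_left ?_ hK0)
      nlinarith [exp_pos (2 * u x₀)]
    have hf₁ := mul_exp_le_of_isMin (hμ x₁).le hW' (hres x₁) hmin
    have hδ₁ : δ ≤ -f x₁ := hδf x₁ (by nlinarith [exp_pos (2 * u x₁)])
    have hexp_le : δ * exp (2 * u x₁) ≤ 0 * (2 * u x₁) + -3 * c / 2 * (C * K + 1) := by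
      have := (abs_le.1 (hLu x₁)).1
      have := mul_le_mul_of_nonneg_left hosc hC0
      nlinarith [exp_pos (2 * u x₁)]
    linarith [hT' _ hexp_le, le_max_right (T / 2) (T' / 2 + K * (-3 * c / 2))]

theorem kazdanWarnerResidual_eq_zero_of_tendsto {u : ℕ → V → ℝ} {v : V → ℝ} {ε : ℕ → ℝ}
    (hu : Tendsto u atTop (𝓝 v)) (hε : Tendsto ε atTop (𝓝 0))
    (hres : ∀ k x, |kazdanWarnerResidual μ W f c (u k) x| ≤ ε k) (x : V) :
    kazdanWarnerResidual μ W f c v x = 0 := by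
  have hcont : Continuous fun u => kazdanWarnerResidual μ W f c u x := by
    unfold kazdanWarnerResidual
    have := continuous_fracLaplacian_apply μ W x
    fun_prop
  exact tendsto_nhds_unique ((hcont.tendsto v).comp hu)
    (squeeze_zero_norm (fun k => hres k x) hε)

end

theorem stmt_14_general {V : Type*} [Fintype V] [Nonempty V] [DecidableEq V]
    (μ : V → ℝ) (hμ : ∀ x, 0 < μ x)
    (W : V → V → ℝ)
    (hWpos : ∀ x y, x ≠ y → 0 < W x y)
    (L : (V → ℝ) → (V → ℝ))
    (hL : ∀ u x, L u x = (1 / μ x) * ∑ y ∈ Finset.univ.erase x, W x y * (u x - u y))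
    (c : ℝ) (hc : c < 0) (f : V → ℝ)
    (u : ℕ → V → ℝ)
    (hps : Filter.Tendsto
      (fun k => Finset.univ.sup' Finset.univ_nonempty
        (fun x => |L (u k) x - f x * Real.exp (2 * u k x) + c|))
      Filter.atTop (nhds 0)) :
    ∃ φ : ℕ → ℕ, StrictMono φ ∧ ∃ v : V → ℝ,
      TendstoUniformly (fun k => u (φ k)) v Filter.atTop ∧
      ∀ x, L v x = f x * Real.exp (2 * v x) - c := by
  obtain rfl : L = fracLaplacian μ W := funext fun u => funext (hL u)
  have hres (k : ℕ) (x : V) : |kazdanWarnerResidual μ W f c (u k) x| ≤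
      univ.sup' univ_nonempty fun x => |kazdanWarnerResidual μ W f c (u k) x| :=
    le_sup' (fun x => |kazdanWarnerResidual μ W f c (u k) x|) (mem_univ x)
  obtain ⟨m, hm⟩ := exists_ge_of_abs_kazdanWarnerResidual_le (fun x => (hμ x).le)
    (fun x y h => (hWpos x y h).le) hc (f := f)
  obtain ⟨M, hM⟩ := exists_le_of_abs_kazdanWarnerResidual_le hμ hWpos hc (f := f)
  have hbounded : ∀ᶠ k in atTop, u k ∈ Set.Icc (fun _ => m) (fun _ => M) := by
    filter_upwards [hps.eventually (ge_mem_nhds (by linarith : (0 : ℝ) < -c / 2))] with k hk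
    have hk' (x : V) := (hres k x).trans hk
    exact ⟨fun x => hm _ hk' x, fun x => hM _ hk' x⟩
  obtain ⟨v, -, φ, hφ, hlim⟩ :=
    tendsto_subseq_of_frequently_bounded (Metric.isBounded_Icc _ _) hbounded.frequently
  refine ⟨φ, hφ, v, tendstoUniformly_of_tendsto_pi hlim, fun x => ?_⟩
  have := kazdanWarnerResidual_eq_zero_of_tendsto hlim (hps.comp hφ.tendsto_atTop)
    (fun k => hres (φ k)) x
  unfold kazdanWarnerResidual at this
  linarith

/-- Palais–Smale type compactness: if `‖L u_k - f e^{2 u_k} + c‖_∞ → 0`,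
then a subsequence of `(u_k)` converges uniformly on `V` to a solution of
`L u = f e^{2u} - c`. -/
theorem stmt_14 {V : Type*} [Fintype V] [Nonempty V] [DecidableEq V]
    (μ : V → ℝ) (hμ : ∀ x, 0 < μ x)
    (W : V → V → ℝ) (hWsym : ∀ x y, W x y = W y x)
    (hWpos : ∀ x y, x ≠ y → 0 < W x y)
    (L : (V → ℝ) → (V → ℝ))
    (hL : ∀ u x, L u x = (1 / μ x) * ∑ y ∈ Finset.univ.erase x, W x y * (u x - u y))
    (c : ℝ) (hc : c < 0) (f : V → ℝ)
    (u : ℕ → V → ℝ)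
    (hps : Filter.Tendsto
      (fun k => Finset.univ.sup' Finset.univ_nonempty
        (fun x => |L (u k) x - f x * Real.exp (2 * u k x) + c|))
      Filter.atTop (nhds 0)) :
    ∃ φ : ℕ → ℕ, StrictMono φ ∧ ∃ v : V → ℝ,
      TendstoUniformly (fun k => u (φ k)) v Filter.atTop ∧
      ∀ x, L v x = f x * Real.exp (2 * v x) - c :=
  stmt_14_general μ hμ W hWpos L hL c hc f u hps
end
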